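/- For a cochain complex of finite-dimensional real inner product spaces with differentials d^r satisfying d^{r+1} ∘ d^r = 0, the Laplacian Δ^r = (d^r)* ∘ d^r + d^{r-1} ∘ (d^{r-1})* has kernel isomorphic (as a real vector space) to the cohomology ker d^r / im d^{r-1}. -/

import Mathlib

/-!
Since `re ⟪Δ x, x⟫ = ‖d¹ x‖² + ‖(d⁰)* x‖²`, the kernel of `Δ` is `ker d¹ ∩ ker (d⁰)*`, and
`ker (d⁰)* = (im d⁰)ᗮ`. So harmonic elements form the orthogonal complement of `im d⁰` inside
`ker d¹`, which has the dimension of the cohomology.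
-/

open LinearMap Module Submodule

variable {𝕜 E F G : Type*} [RCLike 𝕜] [NormedAddCommGroup E] [InnerProductSpace 𝕜 E]

lemma Submodule.finrank_inf_orthogonal_eq_finrank_quotient {S K : Submodule 𝕜 E}
    [FiniteDimensional 𝕜 K] (h : S ≤ K) :
    finrank 𝕜 ↥(Sᗮ ⊓ K) = finrank 𝕜 (K ⧸ S.comap K.subtype) := by
  have hS := finrank_add_inf_finrank_orthogonal h
  have hquot := finrank_quotient_add_finrank (S.comap K.subtype)
  rw [(comapSubtypeEquivOfLe h).finrank_eq] at hquot
  omega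

variable [FiniteDimensional 𝕜 E]
  [NormedAddCommGroup F] [InnerProductSpace 𝕜 F] [FiniteDimensional 𝕜 F]
  [NormedAddCommGroup G] [InnerProductSpace 𝕜 G] [FiniteDimensional 𝕜 G]

lemma LinearMap.re_inner_adjoint_comp_add_comp_adjoint_self (T : E →ₗ[𝕜] F) (S : G →ₗ[𝕜] E)
    (x : E) :
    RCLike.re (inner 𝕜 ((adjoint T ∘ₗ T + S ∘ₗ adjoint S) x) x) = ‖T x‖ ^ 2 + ‖adjoint S x‖ ^ 2 := by
  rw [add_apply, inner_add_left, map_add, comp_apply, comp_apply, adjoint_inner_left T x (T x),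
    ← adjoint_inner_right S (adjoint S x) x, inner_self_eq_norm_sq, inner_self_eq_norm_sq]

lemma LinearMap.ker_adjoint_comp_add_comp_adjoint (T : E →ₗ[𝕜] F) (S : G →ₗ[𝕜] E) :
    ker (adjoint T ∘ₗ T + S ∘ₗ adjoint S) = ker T ⊓ ker (adjoint S) := by
  ext x
  simp only [mem_inf, mem_ker]
  constructor
  · intro hx
    have hsum : ‖T x‖ ^ 2 + ‖adjoint S x‖ ^ 2 = 0 := by
      rw [← re_inner_adjoint_comp_add_comp_adjoint_self, hx, inner_zero_left, map_zero]
    constructor <;> rw [← norm_eq_zero] <;> nlinarith [sq_nonneg ‖T x‖, sq_nonneg ‖adjoint S x‖]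
  · rintro ⟨hT, hS⟩
    simp [hT, hS]

/-- Hodge theory for a cochain complex segment of finite-dimensional real inner
product spaces: the kernel of the Laplacian is isomorphic to the cohomology. -/
theorem laplacian_kernel_iso_cohomology
    (A B C : Type) [NormedAddCommGroup A] [InnerProductSpace ℝ A] [FiniteDimensional ℝ A]
    [NormedAddCommGroup B] [InnerProductSpace ℝ B] [FiniteDimensional ℝ B]
    [NormedAddCommGroup C] [InnerProductSpace ℝ C] [FiniteDimensional ℝ C]
    (d0 : A →ₗ[ℝ] B) (d1 : B →ₗ[ℝ] C) (hdd : d1 ∘ₗ d0 = 0)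
    (Δ : B →ₗ[ℝ] B)
    (hΔ : Δ = (LinearMap.adjoint d1) ∘ₗ d1 + d0 ∘ₗ (LinearMap.adjoint d0)) :
    Nonempty ((LinearMap.ker Δ) ≃ₗ[ℝ]
      ((LinearMap.ker d1) ⧸ (LinearMap.range d0).comap (LinearMap.ker d1).subtype)) := by
  have hexact : range d0 ≤ ker d1 := range_le_ker_iff.mpr hdd
  have harmonic : ker Δ = (range d0)ᗮ ⊓ ker d1 := by
    rw [hΔ, ker_adjoint_comp_add_comp_adjoint, orthogonal_range, inf_comm]
  exact ⟨.ofFinrankEq _ _ (harmonic ▸ finrank_inf_orthogonal_eq_finrank_quotient hexact)⟩
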